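/- arXiv:2410.21114 — 2 statements merged into one kernel-verified Lean document; each statement's English description precedes it below -/
import Mathlib

section
/- (Existence, uniqueness and continuity of the forward generalized characteristic.) Let (x₀,t₀) ∈ ℝ × (0,∞). For each t₁ > t₀ there exists exactly one point x₁ ∈ ℝ satisfying x₁ + (t₀ − t₁)·f'(u⁻(x₁,t₁)) ≤ x₀ ≤ x₁ + (t₀ − t₁)·f'(u⁺(x₁,t₁)). Writing x(t₁) for this point and setting x(t₀) := x₀, the resulting function x : [t₀, ∞) → ℝ is continuous, and the backward characteristic triangles along it are nested: for all t₀ ≤ t₁ ≤ t₂, x(t₂) − t₂·f'(u⁻(x(t₂),t₂)) ≤ x(t₁) − t₁·f'(u⁻(x(t₁),t₁)) and x(t₁) − t₁·f'(u⁺(x(t₁),t₁)) ≤ x(t₂) − t₂·f'(u⁺(x(t₂),t₂)). -/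
open MeasureTheory Filter Set

noncomputable def eFun (f φ : ℝ → ℝ) (u x t : ℝ) : ℝ :=
  t * (∫ s in (0:ℝ)..u, deriv (deriv f) s * (φ (x - t * deriv f s) - s))

def maxSet (f φ : ℝ → ℝ) (x t : ℝ) : Set ℝ :=
  {w : ℝ | ∀ v : ℝ, eFun f φ v x t ≤ eFun f φ w x t}

noncomputable def uPlus (f φ : ℝ → ℝ) (x t : ℝ) : ℝ := sInf (maxSet f φ x t)

noncomputable def uMinus (f φ : ℝ → ℝ) (x t : ℝ) : ℝ := sSup (maxSet f φ x t)


/-!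
Write `Φ` for a primitive of `φ` and `L u = u f'(u) - f(u)`, so that `L = f^* ∘ f'` with `f^*`
the Legendre transform of `f`. The substitution `p = f'(s)` turns the energy into
`E(u; x, t) = Φ(x - t f'(0)) - Φ(x - t f'(u)) - t (L u - L 0)`. Hence `E` is jointly continuous,
the maximizers have a closed graph, and since `Φ` is `M`-Lipschitz they lie in `[-M, M]`.
Strict convexity of `f^*` (in the slope variable) gives two facts about backward characteristics
`s ↦ y + (s - t) f'(w)`, `w` a maximizer at `(y, t)`: characteristics from different points
never cross, and at every earlier point a characteristic carries the unique maximizer.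
Non-crossing makes `y` ↦ (section at time `t₀` of the backward triangle of `(y, t₁)`) strictly
increasing, which gives uniqueness; existence follows from connectedness of `ℝ`, because
"left end of the section `≤ x₀`" and "right end `≥ x₀`" are closed conditions covering `ℝ`.
The characteristic triangles are nested because the foot at time `t₁` of a characteristic from
`(x(t₂), t₂)` cannot lie on the wrong side of `x(t₁)`, and continuity of `x` follows from the
closed graph of the relation `x₀ ∈ section(x, t)` together with `|x(t) - x₀| ≤ C (t - t₀)`.
-/

open Topology

section Topology

variable {X Y : Type*} [TopologicalSpace X] [TopologicalSpace Y]

theorem isClosed_setOf_exists_mem_of_isCompact {K : Set Y} (hK : IsCompact K)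
    {C : Set (X × Y)} (hC : IsClosed C) : IsClosed {x | ∃ y ∈ K, (x, y) ∈ C} := by
  have : CompactSpace K := isCompact_iff_compactSpace.mp hK
  have hproj : {x | ∃ y ∈ K, (x, y) ∈ C} = Prod.fst '' {p : X × K | (p.1, (p.2 : Y)) ∈ C} := by
    ext x
    simp
  rw [hproj]
  exact isClosedMap_fst_of_compactSpace _ (hC.preimage (by fun_prop))

theorem continuousWithinAt_of_isClosed_graph {g : X → Y} {s : Set X} {a : X} {K : Set Y}
    {G : Set (X × Y)} (hK : IsCompact K) (hgK : ∀ᶠ x in 𝓝[s] a, g x ∈ K) (hG : IsClosed G)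
    (hgG : ∀ x ∈ s, (x, g x) ∈ G) (hGa : ∀ y, (a, y) ∈ G → y = g a) :
    ContinuousWithinAt g s a := by
  refine hK.tendsto_nhds_of_unique_mapClusterPt hgK fun y _ hy => hGa y ?_
  have hgraph : MapClusterPt (a, y) (𝓝[s] a) fun x => (x, g x) := by
    rw [((𝓝 a).basis_sets.prod_nhds (𝓝 y).basis_sets).mapClusterPt_iff_frequently]
    rintro ⟨U, V⟩ ⟨hU, hV⟩
    exact (hy.frequently (p := (· ∈ V)) hV).and_eventually
      (mem_nhdsWithin_of_mem_nhds hU) |>.mono fun x hx => ⟨hx.2, hx.1⟩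
  exact hG.mem_of_mapClusterPt hgraph (eventually_mem_nhdsWithin.mono hgG)

end Topology

theorem integral_deriv_mul_comp_of_monotone {g g' : ℝ → ℝ} (hg : ∀ x, HasDerivAt g (g' x) x)
    (hmono : Monotone g) (ψ : ℝ → ℝ) (a b : ℝ) :
    ∫ s in a..b, g' s * ψ (g s) = ∫ y in g a..g b, ψ y := by
  wlog hab : a ≤ b generalizing a b
  · rw [intervalIntegral.integral_symm, this b a (le_of_not_ge hab),
      intervalIntegral.integral_symm, neg_neg]
  have hcont : Continuous g := continuous_iff_continuousAt.2 fun x => (hg x).continuousAt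
  rw [intervalIntegral.integral_of_le hab, intervalIntegral.integral_of_le (hmono hab),
    ← integral_Icc_eq_integral_Ioc, ← integral_Icc_eq_integral_Ioc,
    ← hcont.continuousOn.image_Icc_of_monotoneOn hab (hmono.monotoneOn _),
    integral_image_eq_integral_deriv_smul_of_monotoneOn measurableSet_Icc
      (fun x _ => (hg x).hasDerivWithinAt) (hmono.monotoneOn _)]
  rfl

theorem intervalIntegrable_of_abs_le {g : ℝ → ℝ} {M : ℝ} (hg : Measurable g)
    (hM : ∀ x, |g x| ≤ M) (a b : ℝ) : IntervalIntegrable g volume a b :=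
  (intervalIntegrable_const (c := M)).mono_fun' hg.aestronglyMeasurable (ae_of_all _ hM)

namespace ScalarConservationLaw

variable {f φ : ℝ → ℝ} {M : ℝ}

theorem hasDerivAt_deriv_of_contDiff_two (hf : ContDiff ℝ 2 f) (x : ℝ) :
    HasDerivAt (deriv f) (deriv (deriv f) x) x :=
  ((hf.iterate_deriv' 1 1).differentiable one_ne_zero x).hasDerivAt

theorem continuous_deriv_deriv_of_contDiff_two (hf : ContDiff ℝ 2 f) :
    Continuous (deriv (deriv f)) :=
  (hf.iterate_deriv' 0 2).continuous

theorem strictMono_deriv_of_volume_zero (hf : ContDiff ℝ 2 f) (hconv : ∀ u, 0 ≤ deriv (deriv f) u)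
    (hdeg : volume {u | deriv (deriv f) u = 0} = 0) : StrictMono (deriv f) := by
  have hmono : Monotone (deriv f) := monotone_of_deriv_nonneg
    (fun x => (hasDerivAt_deriv_of_contDiff_two hf x).differentiableAt) hconv
  intro a b hab
  refine (hmono hab.le).lt_of_ne fun heq => ?_
  have hconst : ∀ x ∈ Icc a b, deriv f x = deriv f a := fun x hx =>
    le_antisymm (heq ▸ hmono hx.2) (hmono hx.1)
  have hzero : Ioo a b ⊆ {u | deriv (deriv f) u = 0} := fun x hx => by
    have hloc : deriv f =ᶠ[𝓝 x] fun _ => deriv f a :=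
      eventually_of_mem (Ioo_mem_nhds hx.1 hx.2) fun y hy => hconst y (Ioo_subset_Icc_self hy)
    simpa using hloc.deriv_eq
  have := (measure_mono hzero).trans hdeg.le
  rw [Real.volume_Ioo, nonpos_iff_eq_zero, ENNReal.ofReal_eq_zero] at this
  linarith

/-- `legendre f u = f^*(f' u)`: the Legendre transform of `f` at the slope `f' u`. -/
noncomputable def legendre (f : ℝ → ℝ) (u : ℝ) : ℝ := u * deriv f u - f u

theorem add_deriv_mul_sub_lt (hf : Differentiable ℝ f) (hf' : StrictMono (deriv f)) {a b : ℝ}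
    (hab : a ≠ b) : f a + deriv f a * (b - a) < f b := by
  have hconv := hf'.strictConvexOn_univ_of_deriv hf.continuous
  rcases hab.lt_or_gt with hab | hba
  · have := hconv.deriv_lt_slope (mem_univ a) (mem_univ b) hab (hf a)
    rw [slope_def_field, lt_div_iff₀ (sub_pos.2 hab)] at this
    linarith
  · have := hconv.slope_lt_deriv (mem_univ b) (mem_univ a) hba (hf a)
    rw [slope_def_field, div_lt_iff₀ (sub_pos.2 hba)] at this
    linarith

theorem legendre_add_mul_lt (hf : Differentiable ℝ f) (hf' : StrictMono (deriv f)) {a b : ℝ}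
    (hab : a ≠ b) : legendre f b + b * (deriv f a - deriv f b) < legendre f a := by
  have := add_deriv_mul_sub_lt hf hf' hab
  unfold legendre
  linarith

/-- Jensen's inequality for the Legendre transform, written in the slope variable `p = f' u`. -/
theorem legendre_lt_of_deriv_eq (hf : Differentiable ℝ f) (hf' : StrictMono (deriv f))
    {a b c l m : ℝ} (hl : 0 < l) (hm : 0 ≤ m) (hca : c ≠ a)
    (hc : (l + m) * deriv f c = l * deriv f a + m * deriv f b) :
    (l + m) * legendre f c < l * legendre f a + m * legendre f b := by
  have ha := mul_lt_mul_of_pos_left (legendre_add_mul_lt hf hf' hca.symm) hl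
  have hb : m * (legendre f c + c * (deriv f b - deriv f c)) ≤ m * legendre f b := by
    rcases eq_or_ne b c with rfl | hbc
    · simp
    · exact mul_le_mul_of_nonneg_left (legendre_add_mul_lt hf hf' hbc).le hm
  linear_combination ha + hb + c * hc

noncomputable def primitive (φ : ℝ → ℝ) (y : ℝ) : ℝ := ∫ s in (0:ℝ)..y, φ s

theorem abs_primitive_sub_le (hφ : Measurable φ) (hM : ∀ x, |φ x| ≤ M) (y z : ℝ) :
    |primitive φ y - primitive φ z| ≤ M * |y - z| := by
  rw [primitive, primitive, intervalIntegral.integral_interval_sub_left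
    (intervalIntegrable_of_abs_le hφ hM _ _) (intervalIntegrable_of_abs_le hφ hM _ _)]
  simpa only [Real.norm_eq_abs] using intervalIntegral.norm_integral_le_of_norm_le_const
    fun x _ => (Real.norm_eq_abs _).trans_le (hM x)

theorem continuous_primitive (hφ : Measurable φ) (hM : ∀ x, |φ x| ≤ M) :
    Continuous (primitive φ) :=
  intervalIntegral.continuous_primitive (intervalIntegrable_of_abs_le hφ hM) 0

theorem continuous_legendre (hf : ContDiff ℝ 2 f) : Continuous (legendre f) :=
  continuous_id.mul (hf.continuous_deriv one_le_two) |>.sub hf.continuous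

theorem integral_mul_deriv_deriv (hf : ContDiff ℝ 2 f) (u : ℝ) :
    ∫ s in (0:ℝ)..u, s * deriv (deriv f) s = legendre f u - legendre f 0 := by
  refine intervalIntegral.integral_eq_sub_of_hasDerivAt (fun s _ => ?_)
    ((continuous_id.mul (continuous_deriv_deriv_of_contDiff_two hf)).intervalIntegrable _ _)
  have := (hasDerivAt_id' s).mul (hasDerivAt_deriv_of_contDiff_two hf s) |>.sub
    ((hf.differentiable two_ne_zero s).hasDerivAt)
  exact this.congr_deriv (by ring)

theorem eFun_eq (hf : ContDiff ℝ 2 f) (hmono : Monotone (deriv f)) (hφ : Measurable φ)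
    (hM : ∀ x, |φ x| ≤ M) (u x t : ℝ) :
    eFun f φ u x t = primitive φ (x - t * deriv f 0) - primitive φ (x - t * deriv f u)
      - t * (legendre f u - legendre f 0) := by
  have hcont2 := continuous_deriv_deriv_of_contDiff_two hf
  have hcomp : IntervalIntegrable (fun s => deriv (deriv f) s * φ (x - t * deriv f s))
      volume 0 u :=
    (intervalIntegrable_of_abs_le (hφ.comp (by fun_prop)) (fun s => hM _) 0 u).continuousOn_mul
      hcont2.continuousOn
  have hsub : t * ∫ s in (0:ℝ)..u, deriv (deriv f) s * φ (x - t * deriv f s)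
      = primitive φ (x - t * deriv f 0) - primitive φ (x - t * deriv f u) := by
    rw [integral_deriv_mul_comp_of_monotone (hasDerivAt_deriv_of_contDiff_two hf) hmono
      (fun p => φ (x - t * p)), intervalIntegral.mul_integral_comp_sub_mul, primitive,
      primitive, intervalIntegral.integral_interval_sub_left
        (intervalIntegrable_of_abs_le hφ hM _ _) (intervalIntegrable_of_abs_le hφ hM _ _)]
  rw [eFun, ← integral_mul_deriv_deriv hf, ← hsub, ← mul_sub, ← intervalIntegral.integral_sub
    hcomp ((by fun_prop : Continuous fun s => s * deriv (deriv f) s).intervalIntegrable _ _)]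
  congr 1
  exact intervalIntegral.integral_congr fun s _ => by ring

theorem continuous_eFun (hf : ContDiff ℝ 2 f) (hmono : Monotone (deriv f)) (hφ : Measurable φ)
    (hM : ∀ x, |φ x| ≤ M) : Continuous fun p : ℝ × ℝ × ℝ => eFun f φ p.1 p.2.1 p.2.2 := by
  simp_rw [eFun_eq hf hmono hφ hM]
  have := continuous_primitive hφ hM
  have := continuous_legendre hf
  have := hf.continuous_deriv one_le_two
  fun_prop

theorem isClosed_setOf_mem_maxSet (hf : ContDiff ℝ 2 f) (hmono : Monotone (deriv f))
    (hφ : Measurable φ) (hM : ∀ x, |φ x| ≤ M) :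
    IsClosed {p : (ℝ × ℝ) × ℝ | p.2 ∈ maxSet f φ p.1.2 p.1.1} := by
  have hE := continuous_eFun hf hmono hφ hM
  have hgraph : {p : (ℝ × ℝ) × ℝ | p.2 ∈ maxSet f φ p.1.2 p.1.1}
      = ⋂ v, {p | eFun f φ v p.1.2 p.1.1 ≤ eFun f φ p.2 p.1.2 p.1.1} := by
    ext
    simp [maxSet]
  rw [hgraph]
  exact isClosed_iInter fun v => isClosed_le
    (hE.comp (by fun_prop : Continuous fun p : (ℝ × ℝ) × ℝ => (v, p.1.2, p.1.1)))
    (hE.comp (by fun_prop : Continuous fun p : (ℝ × ℝ) × ℝ => (p.2, p.1.2, p.1.1)))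

structure Admissible (f φ : ℝ → ℝ) (M : ℝ) : Prop where
  contDiff : ContDiff ℝ 2 f
  strictMono_deriv : StrictMono (deriv f)
  measurable : Measurable φ
  abs_le : ∀ x, |φ x| ≤ M

namespace Admissible

variable (h : Admissible f φ M)
include h

theorem monotone_deriv : Monotone (deriv f) := h.strictMono_deriv.monotone

theorem continuous_deriv : Continuous (deriv f) := h.contDiff.continuous_deriv one_le_two

theorem differentiable : Differentiable ℝ f := h.contDiff.differentiable two_ne_zero

theorem eFun_eq (u x t : ℝ) :
    eFun f φ u x t = primitive φ (x - t * deriv f 0) - primitive φ (x - t * deriv f u)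
      - t * (legendre f u - legendre f 0) :=
  ScalarConservationLaw.eFun_eq h.contDiff h.monotone_deriv h.measurable h.abs_le u x t

theorem eFun_sub_eFun_le {t : ℝ} (ht : 0 ≤ t) (v w x : ℝ) :
    eFun f φ v x t - eFun f φ w x t
      ≤ t * (M * |deriv f v - deriv f w| - (legendre f v - legendre f w)) := by
  have hlip := abs_primitive_sub_le h.measurable h.abs_le (x - t * deriv f w) (x - t * deriv f v)
  rw [show x - t * deriv f w - (x - t * deriv f v) = t * (deriv f v - deriv f w) by ring,
    abs_mul, abs_of_nonneg ht] at hlip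
  rw [h.eFun_eq, h.eFun_eq]
  linarith [le_abs_self (primitive φ (x - t * deriv f w) - primitive φ (x - t * deriv f v))]

theorem eFun_lt_eFun_of_lt {t : ℝ} (ht : 0 < t) (x : ℝ) {w : ℝ} (hw : M < w) :
    eFun f φ w x t < eFun f φ M x t := by
  have hle := h.eFun_sub_eFun_le ht.le w M x
  have hlt := legendre_add_mul_lt h.differentiable h.strictMono_deriv hw.ne'
  rw [abs_of_pos (sub_pos.2 (h.strictMono_deriv hw))] at hle
  nlinarith

theorem eFun_lt_eFun_of_lt_neg {t : ℝ} (ht : 0 < t) (x : ℝ) {w : ℝ} (hw : w < -M) :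
    eFun f φ w x t < eFun f φ (-M) x t := by
  have hle := h.eFun_sub_eFun_le ht.le w (-M) x
  have hlt := legendre_add_mul_lt h.differentiable h.strictMono_deriv hw.ne
  rw [abs_of_neg (sub_neg.2 (h.strictMono_deriv hw))] at hle
  nlinarith

theorem maxSet_subset_Icc {t : ℝ} (ht : 0 < t) (x : ℝ) : maxSet f φ x t ⊆ Icc (-M) M :=
  fun _ hw => ⟨le_of_not_gt fun hlt => (hw (-M)).not_gt (h.eFun_lt_eFun_of_lt_neg ht x hlt),
    le_of_not_gt fun hlt => (hw M).not_gt (h.eFun_lt_eFun_of_lt ht x hlt)⟩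

theorem maxSet_nonempty {t : ℝ} (ht : 0 < t) (x : ℝ) : (maxSet f φ x t).Nonempty := by
  have hM : -M ≤ M := neg_le_self ((abs_nonneg _).trans (h.abs_le 0))
  obtain ⟨w, hw, hmax⟩ := isCompact_Icc.exists_isMaxOn (nonempty_Icc.2 hM)
    ((continuous_eFun h.contDiff h.monotone_deriv h.measurable h.abs_le).comp
      (by fun_prop : Continuous fun u : ℝ => (u, x, t))).continuousOn
  refine ⟨w, fun v => ?_⟩
  rcases lt_or_ge v (-M) with hv | hv
  · exact (h.eFun_lt_eFun_of_lt_neg ht x hv).le.trans (hmax ⟨le_rfl, hM⟩)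
  rcases le_or_gt v M with hv' | hv'
  · exact hmax ⟨hv, hv'⟩
  · exact (h.eFun_lt_eFun_of_lt ht x hv').le.trans (hmax ⟨hM, le_rfl⟩)

theorem isCompact_maxSet {t : ℝ} (ht : 0 < t) (x : ℝ) : IsCompact (maxSet f φ x t) :=
  isCompact_Icc.of_isClosed_subset
    ((isClosed_setOf_mem_maxSet h.contDiff h.monotone_deriv h.measurable h.abs_le).preimage
      (by fun_prop : Continuous fun w : ℝ => ((t, x), w)))
    (h.maxSet_subset_Icc ht x)

theorem uMinus_mem_maxSet {t : ℝ} (ht : 0 < t) (x : ℝ) : uMinus f φ x t ∈ maxSet f φ x t :=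
  (h.isCompact_maxSet ht x).sSup_mem (h.maxSet_nonempty ht x)

theorem uPlus_mem_maxSet {t : ℝ} (ht : 0 < t) (x : ℝ) : uPlus f φ x t ∈ maxSet f φ x t :=
  (h.isCompact_maxSet ht x).sInf_mem (h.maxSet_nonempty ht x)

theorem le_uMinus {t x w : ℝ} (ht : 0 < t) (hw : w ∈ maxSet f φ x t) : w ≤ uMinus f φ x t :=
  le_csSup (h.isCompact_maxSet ht x).bddAbove hw

theorem uPlus_le {t x w : ℝ} (ht : 0 < t) (hw : w ∈ maxSet f φ x t) : uPlus f φ x t ≤ w :=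
  csInf_le (h.isCompact_maxSet ht x).bddBelow hw

/-- Backward characteristics issued from maximizers at `x₁ < x₂` do not cross before time `0`. -/
theorem sub_mul_deriv_le_of_lt {t x₁ x₂ w₁ w₂ : ℝ} (ht : 0 < t) (hx : x₁ < x₂)
    (hw₁ : w₁ ∈ maxSet f φ x₁ t) (hw₂ : w₂ ∈ maxSet f φ x₂ t) :
    x₁ - t * deriv f w₁ ≤ x₂ - t * deriv f w₂ := by
  by_contra! hcross
  set p := deriv f w₁
  set q := deriv f w₂
  set d := (x₂ - x₁) / t
  have htd : t * d = x₂ - x₁ := mul_div_cancel₀ _ ht.ne'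
  have hd : 0 < d := div_pos (sub_pos.2 hx) ht
  have hpq : p + d < q := by nlinarith
  have hw : w₁ < w₂ := h.strictMono_deriv.lt_iff_lt.1 (by linarith)
  -- shifting the two speeds towards each other by `d` swaps the feet of the characteristics
  obtain ⟨w₁', -, hw₁'⟩ := intermediate_value_Ioo hw.le h.continuous_deriv.continuousOn
    (show p + d ∈ Ioo p q by constructor <;> linarith)
  obtain ⟨w₂', -, hw₂'⟩ := intermediate_value_Ioo hw.le h.continuous_deriv.continuousOn
    (show q - d ∈ Ioo p q by constructor <;> linarith)
  have hopt₁ := hw₁ w₂'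
  have hopt₂ := hw₂ w₁'
  rw [h.eFun_eq, h.eFun_eq, hw₂', show x₁ - t * (q - d) = x₂ - t * q by linarith] at hopt₁
  rw [h.eFun_eq, h.eFun_eq, hw₁', show x₂ - t * (p + d) = x₁ - t * p by linarith] at hopt₂
  have hsum : legendre f w₁ + legendre f w₂ ≤ legendre f w₁' + legendre f w₂' :=
    le_of_mul_le_mul_left (by linarith) ht
  have hne₁ : w₁' ≠ w₁ := fun heq => by rw [heq] at hw₁'; linarith
  have hne₂ : w₂' ≠ w₁ := fun heq => by rw [heq] at hw₂'; linarith
  have hj₁ := legendre_lt_of_deriv_eq h.differentiable h.strictMono_deriv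
    (sub_pos.2 hpq) hd.le hne₁ (b := w₂) (by rw [hw₁']; ring)
  have hj₂ := legendre_lt_of_deriv_eq h.differentiable h.strictMono_deriv
    hd (sub_pos.2 hpq).le hne₂ (b := w₂) (by rw [hw₂']; ring)
  nlinarith

theorem add_sub_mul_deriv_lt_of_lt {s t y₁ y₂ w₁ w₂ : ℝ} (hs : 0 < s) (hst : s ≤ t)
    (hy : y₁ < y₂) (hw₁ : w₁ ∈ maxSet f φ y₁ t) (hw₂ : w₂ ∈ maxSet f φ y₂ t) :
    y₁ + (s - t) * deriv f w₁ < y₂ + (s - t) * deriv f w₂ := by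
  have ht := hs.trans_le hst
  have hle := h.sub_mul_deriv_le_of_lt ht hy hw₁ hw₂
  have key : t * (y₂ + (s - t) * deriv f w₂ - (y₁ + (s - t) * deriv f w₁))
      = s * (y₂ - y₁) + (t - s) * (y₂ - t * deriv f w₂ - (y₁ - t * deriv f w₁)) := by ring
  have : 0 < t * (y₂ + (s - t) * deriv f w₂ - (y₁ + (s - t) * deriv f w₁)) := by
    rw [key]
    exact add_pos_of_pos_of_nonneg (mul_pos hs (sub_pos.2 hy))
      (mul_nonneg (sub_nonneg.2 hst) (sub_nonneg.2 hle))
  nlinarith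

theorem eFun_lt_eFun_add_sub_mul_deriv {s t y w v : ℝ} (hs : 0 < s) (hst : s < t)
    (hw : w ∈ maxSet f φ y t) (hvw : v ≠ w) :
    eFun f φ v (y + (s - t) * deriv f w) s < eFun f φ w (y + (s - t) * deriv f w) s := by
  have ht := hs.trans hst
  set z := y + (s - t) * deriv f w
  -- `f' v'` is the speed of the line from `(y, t)` to the point where the line from `(z, s)`
  -- with speed `f' v` meets time `0`
  have hmem : (s / t) • deriv f v + ((t - s) / t) • deriv f w ∈ uIcc (deriv f v) (deriv f w) :=
    convex_uIcc _ _ left_mem_uIcc right_mem_uIcc (div_nonneg hs.le ht.le)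
      (div_nonneg (sub_nonneg.2 hst.le) ht.le) (by field_simp; ring)
  obtain ⟨v', -, hv'⟩ := intermediate_value_uIcc h.continuous_deriv.continuousOn hmem
  have hv't : t * deriv f v' = s * deriv f v + (t - s) * deriv f w := by
    rw [hv', smul_eq_mul, smul_eq_mul]
    field_simp
  have hopt := hw v'
  rw [h.eFun_eq, h.eFun_eq, show y - t * deriv f v' = z - s * deriv f v by
    simp only [z]; linarith] at hopt
  have hne : v' ≠ v := by
    intro heq
    rw [heq] at hv't
    have : (t - s) * (deriv f v - deriv f w) = 0 := by linarith
    exact hvw (h.strictMono_deriv.injective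
      (sub_eq_zero.1 ((mul_eq_zero.1 this).resolve_left (sub_pos.2 hst).ne')))
  have hj := legendre_lt_of_deriv_eq h.differentiable h.strictMono_deriv hs
    (sub_nonneg.2 hst.le) hne (b := w) (by rw [add_sub_cancel]; exact hv't)
  rw [add_sub_cancel] at hj
  rw [h.eFun_eq, h.eFun_eq, show z - s * deriv f w = y - t * deriv f w by simp only [z]; ring]
  nlinarith

/-- At each earlier point of a backward characteristic, its speed is the only maximizer. -/
theorem maxSet_add_sub_mul_deriv {s t y w : ℝ} (hs : 0 < s) (hst : s < t)
    (hw : w ∈ maxSet f φ y t) : maxSet f φ (y + (s - t) * deriv f w) s = {w} := by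
  ext v
  refine ⟨fun hv => by_contra fun hvw =>
    (hv w).not_gt (h.eFun_lt_eFun_add_sub_mul_deriv hs hst hw hvw), ?_⟩
  rintro rfl u
  rcases eq_or_ne u v with rfl | huv
  · exact le_rfl
  · exact (h.eFun_lt_eFun_add_sub_mul_deriv hs hst hw huv).le

theorem add_sub_mul_deriv_uMinus_le_iff {s t y x : ℝ} (ht : 0 < t) (hst : s ≤ t) :
    y + (s - t) * deriv f (uMinus f φ y t) ≤ x
      ↔ ∃ w ∈ maxSet f φ y t, y + (s - t) * deriv f w ≤ x := by
  refine ⟨fun hle => ⟨_, h.uMinus_mem_maxSet ht y, hle⟩, fun ⟨w, hw, hle⟩ => ?_⟩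
  have := mul_le_mul_of_nonpos_left (h.monotone_deriv (h.le_uMinus ht hw)) (sub_nonpos.2 hst)
  linarith

theorem le_add_sub_mul_deriv_uPlus_iff {s t y x : ℝ} (ht : 0 < t) (hst : s ≤ t) :
    x ≤ y + (s - t) * deriv f (uPlus f φ y t)
      ↔ ∃ w ∈ maxSet f φ y t, x ≤ y + (s - t) * deriv f w := by
  refine ⟨fun hle => ⟨_, h.uPlus_mem_maxSet ht y, hle⟩, fun ⟨w, hw, hle⟩ => ?_⟩
  have := mul_le_mul_of_nonpos_left (h.monotone_deriv (h.uPlus_le ht hw)) (sub_nonpos.2 hst)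
  linarith

theorem isClosed_setOf_exists_mem_maxSet {s : ℝ} (hs : 0 < s) {R : Set ((ℝ × ℝ) × ℝ)}
    (hR : IsClosed R) :
    IsClosed {p : ℝ × ℝ | s ≤ p.1 ∧ ∃ w ∈ maxSet f φ p.2 p.1, (p, w) ∈ R} := by
  have hC := (isClosed_setOf_mem_maxSet h.contDiff h.monotone_deriv h.measurable h.abs_le).inter hR
  have hset : {p : ℝ × ℝ | s ≤ p.1 ∧ ∃ w ∈ maxSet f φ p.2 p.1, (p, w) ∈ R}
      = {p | s ≤ p.1} ∩ {p | ∃ w ∈ Icc (-M) M,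
          (p, w) ∈ {q : (ℝ × ℝ) × ℝ | q.2 ∈ maxSet f φ q.1.2 q.1.1} ∩ R} := by
    ext p
    refine and_congr_right fun hp => ⟨fun ⟨w, hw, hR⟩ => ⟨w, ?_, hw, hR⟩,
      fun ⟨w, _, hw, hR⟩ => ⟨w, hw, hR⟩⟩
    exact h.maxSet_subset_Icc (hs.trans_le hp) p.2 hw
  rw [hset]
  exact (isClosed_le continuous_const continuous_fst).inter
    (isClosed_setOf_exists_mem_of_isCompact isCompact_Icc hC)

theorem isClosed_setOf_uMinus_le {s : ℝ} (hs : 0 < s) (x : ℝ) :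
    IsClosed {p : ℝ × ℝ | s ≤ p.1 ∧ p.2 + (s - p.1) * deriv f (uMinus f φ p.2 p.1) ≤ x} := by
  have := h.continuous_deriv
  have hset : {p : ℝ × ℝ | s ≤ p.1 ∧ p.2 + (s - p.1) * deriv f (uMinus f φ p.2 p.1) ≤ x}
      = {p | s ≤ p.1 ∧ ∃ w ∈ maxSet f φ p.2 p.1,
          (p, w) ∈ {q : (ℝ × ℝ) × ℝ | q.1.2 + (s - q.1.1) * deriv f q.2 ≤ x}} := by
    ext p
    exact and_congr_right fun hp => h.add_sub_mul_deriv_uMinus_le_iff (hs.trans_le hp) hp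
  rw [hset]
  exact h.isClosed_setOf_exists_mem_maxSet hs (isClosed_le (by fun_prop) continuous_const)

theorem isClosed_setOf_le_uPlus {s : ℝ} (hs : 0 < s) (x : ℝ) :
    IsClosed {p : ℝ × ℝ | s ≤ p.1 ∧ x ≤ p.2 + (s - p.1) * deriv f (uPlus f φ p.2 p.1)} := by
  have := h.continuous_deriv
  have hset : {p : ℝ × ℝ | s ≤ p.1 ∧ x ≤ p.2 + (s - p.1) * deriv f (uPlus f φ p.2 p.1)}
      = {p | s ≤ p.1 ∧ ∃ w ∈ maxSet f φ p.2 p.1,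
          (p, w) ∈ {q : (ℝ × ℝ) × ℝ | x ≤ q.1.2 + (s - q.1.1) * deriv f q.2}} := by
    ext p
    exact and_congr_right fun hp => h.le_add_sub_mul_deriv_uPlus_iff (hs.trans_le hp) hp
  rw [hset]
  exact h.isClosed_setOf_exists_mem_maxSet hs (isClosed_le continuous_const (by fun_prop))

end Admissible

/-- The section at time `s` of the backward characteristic triangle with apex `(y, t)`. -/
def backwardTriangle (f φ : ℝ → ℝ) (y t s : ℝ) : Set ℝ :=
  Icc (y + (s - t) * deriv f (uMinus f φ y t)) (y + (s - t) * deriv f (uPlus f φ y t))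

theorem mem_backwardTriangle_self (y t : ℝ) : y ∈ backwardTriangle f φ y t t := by
  simp [backwardTriangle]

namespace Admissible

variable (h : Admissible f φ M)
include h

theorem exists_mem_backwardTriangle {s t : ℝ} (hs : 0 < s) (hst : s ≤ t) (x : ℝ) :
    ∃ y, x ∈ backwardTriangle f φ y t s := by
  have ht := hs.trans_le hst
  have hslice : Continuous fun y : ℝ => (t, y) := by fun_prop
  have hminus : IsClosed {y | y + (s - t) * deriv f (uMinus f φ y t) ≤ x} := by
    simpa [hst] using (h.isClosed_setOf_uMinus_le hs x).preimage hslice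
  have hplus : IsClosed {y | x ≤ y + (s - t) * deriv f (uPlus f φ y t)} := by
    simpa [hst] using (h.isClosed_setOf_le_uPlus hs x).preimage hslice
  have hcover : univ ⊆ {y | y + (s - t) * deriv f (uMinus f φ y t) ≤ x}
      ∪ {y | x ≤ y + (s - t) * deriv f (uPlus f φ y t)} := fun y _ => by
    have := mul_le_mul_of_nonpos_left (h.monotone_deriv (h.uPlus_le ht
      (h.uMinus_mem_maxSet ht y))) (sub_nonpos.2 hst)
    by_cases hA : y + (s - t) * deriv f (uMinus f φ y t) ≤ x
    · exact Or.inl hA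
    · exact Or.inr (show x ≤ _ by linarith)
  obtain ⟨y₁, hy₁⟩ : ∃ y, y + (s - t) * deriv f (uMinus f φ y t) ≤ x := by
    refine ⟨x + (t - s) * deriv f (-M), ?_⟩
    have := h.monotone_deriv (h.maxSet_subset_Icc ht _ (h.uMinus_mem_maxSet ht
      (x + (t - s) * deriv f (-M)))).1
    nlinarith
  obtain ⟨y₂, hy₂⟩ : ∃ y, x ≤ y + (s - t) * deriv f (uPlus f φ y t) := by
    refine ⟨x + (t - s) * deriv f M, ?_⟩
    have := h.monotone_deriv (h.maxSet_subset_Icc ht _ (h.uPlus_mem_maxSet ht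
      (x + (t - s) * deriv f M))).2
    nlinarith
  obtain ⟨y, -, hA, hB⟩ := isPreconnected_closed_iff.1 isPreconnected_univ _ _ hminus hplus
    hcover ⟨y₁, mem_univ _, hy₁⟩ ⟨y₂, mem_univ _, hy₂⟩
  exact ⟨y, hA, hB⟩

theorem eq_of_mem_backwardTriangle {s t x y₁ y₂ : ℝ} (hs : 0 < s) (hst : s ≤ t)
    (hy₁ : x ∈ backwardTriangle f φ y₁ t s) (hy₂ : x ∈ backwardTriangle f φ y₂ t s) :
    y₁ = y₂ := by
  wlog hlt : y₁ < y₂ generalizing y₁ y₂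
  · rcases (not_lt.1 hlt).eq_or_lt with heq | hgt
    · exact heq.symm
    · exact (this hy₂ hy₁ hgt).symm
  have ht := hs.trans_le hst
  have := h.add_sub_mul_deriv_lt_of_lt hs hst hlt (h.uPlus_mem_maxSet ht y₁)
    (h.uMinus_mem_maxSet ht y₂)
  exact absurd ((hy₁.2.trans_lt this).trans_le hy₂.1) (lt_irrefl x)

theorem existsUnique_mem_backwardTriangle {s t : ℝ} (hs : 0 < s) (hst : s ≤ t) (x : ℝ) :
    ∃! y, x ∈ backwardTriangle f φ y t s :=
  let ⟨y, hy⟩ := h.exists_mem_backwardTriangle hs hst x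
  ⟨y, hy, fun _ hy' => h.eq_of_mem_backwardTriangle hs hst hy' hy⟩

theorem mem_Icc_of_mem_backwardTriangle {s t x y : ℝ} (hs : 0 < s) (hst : s ≤ t)
    (hx : x ∈ backwardTriangle f φ y t s) :
    y ∈ Icc (x + (t - s) * deriv f (-M)) (x + (t - s) * deriv f M) := by
  have ht := hs.trans_le hst
  have hlow := h.monotone_deriv (h.maxSet_subset_Icc ht y (h.uPlus_mem_maxSet ht y)).1
  have hupp := h.monotone_deriv (h.maxSet_subset_Icc ht y (h.uMinus_mem_maxSet ht y)).2
  have hts : 0 ≤ t - s := sub_nonneg.2 hst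
  exact ⟨by nlinarith [hx.2], by nlinarith [hx.1]⟩

theorem sub_mul_deriv_uMinus_le {s t₁ t₂ x y₁ y₂ : ℝ} (hs : 0 < s) (hs₁ : s ≤ t₁)
    (h₁₂ : t₁ ≤ t₂) (hy₁ : x ∈ backwardTriangle f φ y₁ t₁ s)
    (hy₂ : x ∈ backwardTriangle f φ y₂ t₂ s) :
    y₂ - t₂ * deriv f (uMinus f φ y₂ t₂) ≤ y₁ - t₁ * deriv f (uMinus f φ y₁ t₁) := by
  have ht₁ := hs.trans_le hs₁
  rcases h₁₂.eq_or_lt with rfl | hlt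
  · rw [h.eq_of_mem_backwardTriangle hs hs₁ hy₁ hy₂]
  set w := uMinus f φ y₂ t₂
  have hz := h.maxSet_add_sub_mul_deriv ht₁ hlt (h.uMinus_mem_maxSet (ht₁.trans hlt) y₂)
  have hwz : w ∈ maxSet f φ (y₂ + (t₁ - t₂) * deriv f w) t₁ := hz ▸ mem_singleton w
  have hzy : y₂ + (t₁ - t₂) * deriv f w ≤ y₁ := by
    by_contra! hyz
    have := h.add_sub_mul_deriv_lt_of_lt hs hs₁ hyz (h.uPlus_mem_maxSet ht₁ y₁) hwz
    linarith [hy₁.2, hy₂.1]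
  rcases hzy.eq_or_lt with heq | hyz
  · rw [uMinus, ← heq, hz, csSup_singleton]
    linarith
  · linarith [h.sub_mul_deriv_le_of_lt ht₁ hyz hwz (h.uMinus_mem_maxSet ht₁ y₁)]

theorem sub_mul_deriv_uPlus_le {s t₁ t₂ x y₁ y₂ : ℝ} (hs : 0 < s) (hs₁ : s ≤ t₁)
    (h₁₂ : t₁ ≤ t₂) (hy₁ : x ∈ backwardTriangle f φ y₁ t₁ s)
    (hy₂ : x ∈ backwardTriangle f φ y₂ t₂ s) :
    y₁ - t₁ * deriv f (uPlus f φ y₁ t₁) ≤ y₂ - t₂ * deriv f (uPlus f φ y₂ t₂) := by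
  have ht₁ := hs.trans_le hs₁
  rcases h₁₂.eq_or_lt with rfl | hlt
  · rw [h.eq_of_mem_backwardTriangle hs hs₁ hy₁ hy₂]
  set w := uPlus f φ y₂ t₂
  have hz := h.maxSet_add_sub_mul_deriv ht₁ hlt (h.uPlus_mem_maxSet (ht₁.trans hlt) y₂)
  have hwz : w ∈ maxSet f φ (y₂ + (t₁ - t₂) * deriv f w) t₁ := hz ▸ mem_singleton w
  have hzy : y₁ ≤ y₂ + (t₁ - t₂) * deriv f w := by
    by_contra! hyz
    have := h.add_sub_mul_deriv_lt_of_lt hs hs₁ hyz hwz (h.uMinus_mem_maxSet ht₁ y₁)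
    linarith [hy₁.1, hy₂.2]
  rcases hzy.eq_or_lt with heq | hyz
  · rw [uPlus, heq, hz, csInf_singleton]
    linarith
  · linarith [h.sub_mul_deriv_le_of_lt ht₁ hyz (h.uPlus_mem_maxSet ht₁ y₁) hwz]

theorem continuousOn_of_mem_backwardTriangle {X : ℝ → ℝ} {s x : ℝ} (hs : 0 < s)
    (hX : ∀ t ∈ Ici s, x ∈ backwardTriangle f φ (X t) t s) : ContinuousOn X (Ici s) := by
  intro a ha
  refine continuousWithinAt_of_isClosed_graph
    (K := Icc (x - (a + 1 - s) * |deriv f (-M)|) (x + (a + 1 - s) * |deriv f M|))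
    isCompact_Icc ?_ ((h.isClosed_setOf_uMinus_le hs x).inter (h.isClosed_setOf_le_uPlus hs x))
    (fun t ht => ⟨⟨ht, (hX t ht).1⟩, ⟨ht, (hX t ht).2⟩⟩)
    (fun y hy => h.eq_of_mem_backwardTriangle hs ha ⟨hy.1.2, hy.2.2⟩ (hX a ha))
  filter_upwards [self_mem_nhdsWithin, nhdsWithin_le_nhds (Iio_mem_nhds (lt_add_one a))]
    with t (ht : s ≤ t) (hta : t < a + 1)
  have hy := h.mem_Icc_of_mem_backwardTriangle hs ht (hX t ht)
  have hts : 0 ≤ t - s := sub_nonneg.2 ht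
  have hta' : t - s ≤ a + 1 - s := by linarith
  have := mul_le_mul_of_nonneg_left (neg_abs_le (deriv f (-M))) hts
  have := mul_le_mul_of_nonneg_left (le_abs_self (deriv f M)) hts
  have := mul_le_mul_of_nonneg_right hta' (abs_nonneg (deriv f (-M)))
  have := mul_le_mul_of_nonneg_right hta' (abs_nonneg (deriv f M))
  constructor <;> linarith [hy.1, hy.2]

end Admissible

end ScalarConservationLaw

/-- existence, uniqueness and continuity of the forward generalized
characteristic, with nested backward characteristic triangles. -/
theorem stmt16_forward_generalized_characteristic
    (f φ : ℝ → ℝ) (M : ℝ)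
    (hf : ContDiff ℝ 2 f)
    (hconv : ∀ u : ℝ, 0 ≤ deriv (deriv f) u)
    (hdeg : volume {u : ℝ | deriv (deriv f) u = 0} = 0)
    (hφmeas : Measurable φ)
    (hφbdd : ∀ x : ℝ, |φ x| ≤ M)
    (x₀ t₀ : ℝ) (ht₀ : 0 < t₀) :
    (∀ t₁ : ℝ, t₀ < t₁ → ∃! y : ℝ,
      y + (t₀ - t₁) * deriv f (uMinus f φ y t₁) ≤ x₀ ∧
      x₀ ≤ y + (t₀ - t₁) * deriv f (uPlus f φ y t₁)) ∧
    (∀ X : ℝ → ℝ, X t₀ = x₀ →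
      (∀ t₁ : ℝ, t₀ < t₁ →
        X t₁ + (t₀ - t₁) * deriv f (uMinus f φ (X t₁) t₁) ≤ x₀ ∧
        x₀ ≤ X t₁ + (t₀ - t₁) * deriv f (uPlus f φ (X t₁) t₁)) →
      ContinuousOn X (Set.Ici t₀) ∧
      ∀ t₁ t₂ : ℝ, t₀ ≤ t₁ → t₁ ≤ t₂ →
        (X t₂ - t₂ * deriv f (uMinus f φ (X t₂) t₂)
            ≤ X t₁ - t₁ * deriv f (uMinus f φ (X t₁) t₁)) ∧
        (X t₁ - t₁ * deriv f (uPlus f φ (X t₁) t₁)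
            ≤ X t₂ - t₂ * deriv f (uPlus f φ (X t₂) t₂))) := by
  have h : ScalarConservationLaw.Admissible f φ M :=
    ⟨hf, ScalarConservationLaw.strictMono_deriv_of_volume_zero hf hconv hdeg, hφmeas, hφbdd⟩
  refine ⟨fun t₁ ht₁ => h.existsUnique_mem_backwardTriangle ht₀ ht₁.le x₀, fun X hX₀ hX => ?_⟩
  have hX' : ∀ t ∈ Ici t₀, x₀ ∈ ScalarConservationLaw.backwardTriangle f φ (X t) t t₀ := by
    intro t ht
    rcases (mem_Ici.1 ht).eq_or_lt with rfl | hlt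
    · exact hX₀ ▸ ScalarConservationLaw.mem_backwardTriangle_self _ _
    · exact hX t hlt
  exact ⟨h.continuousOn_of_mem_backwardTriangle ht₀ hX', fun t₁ t₂ h₀₁ h₁₂ =>
    ⟨h.sub_mul_deriv_uMinus_le ht₀ h₀₁ h₁₂ (hX' t₁ h₀₁) (hX' t₂ (h₀₁.trans h₁₂)),
      h.sub_mul_deriv_uPlus_le ht₀ h₀₁ h₁₂ (hX' t₁ h₀₁) (hX' t₂ (h₀₁.trans h₁₂))⟩⟩
end

section
/- (Uniform decay in the sup-norm for uniformly convex flux and Lᵖ perturbations of a constant.) Assume in addition that there is c₀ > 0 with f''(u) ≥ c₀ for all u ∈ ℝ, and let m ∈ ℝ and p ∈ [1,∞) be such that ∫_ℝ |φ(x) − m|ᵖ dx < ∞. Then there exists a constant C > 0 (depending only on f, c₀, p, M, and the Lᵖ-norm of φ − m) such that for every (x,t) ∈ ℝ × (0,∞) and every w ∈ 𝒰(x,t), |w − m| ≤ C·t^{−1/(p+1)}. In particular |u⁺(x,t) − m| ≤ C·t^{−1/(p+1)} and |u⁻(x,t) − m| ≤ C·t^{−1/(p+1)} uniformly in x ∈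 ℝ. -/
open MeasureTheory Filter Set

/-!
Comparing a maximiser `w` of `E(·; x, t)` with the competitor `m` gives
`∫ₘʷ f''(s) (φ(x - t f'(s)) - s) ds ≥ 0`, hence `c₀ |w - m|² / 2 ≤ ∫ f''(s) |φ(x - t f'(s)) - m| ds`
over the segment between `m` and `w`. Splitting `|φ - m| ≤ ε + ε^(1-p) |φ - m|^p` and substituting
`y = x - t f'(s)` (Jacobian `t f''(s)`) bounds the right side by
`ε K |w - m| + ε^(1-p) ‖φ - m‖ₚᵖ / t`, where `K` bounds `f''` on the segment. Taking `ε`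
proportional to `|w - m|` gives `|w - m|^(p+1) ≲ 1 / t`. Maximisers exist and lie in `[-M, M]`
since `E(v) < E(±M)` for `v` outside that interval, so `u⁺` and `u⁻` are maximisers.
-/

lemma ContDiff.continuous_deriv_deriv {f : ℝ → ℝ} (hf : ContDiff ℝ 2 f) :
    Continuous (deriv (deriv f)) :=
  (hf.deriv' (n := 1)).continuous_deriv le_rfl

lemma intervalIntegrable_mul_of_abs_le {q ψ : ℝ → ℝ} {C : ℝ} (hq : Continuous q)
    (hψ : Measurable ψ) (hψC : ∀ y, |ψ y| ≤ C) (a b : ℝ) :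
    IntervalIntegrable (fun s => q s * ψ s) volume a b :=
  (intervalIntegrable_const.mono_fun' hψ.aestronglyMeasurable (ae_of_all _ hψC)).continuousOn_mul
    hq.continuousOn

lemma mul_integral_le_integral_mul {q r : ℝ → ℝ} {c a b : ℝ} (hab : a ≤ b) (hq : Continuous q)
    (hr : Continuous r) (hcq : ∀ s, c ≤ q s) (hr0 : ∀ s ∈ Icc a b, 0 ≤ r s) :
    c * ∫ s in a..b, r s ≤ ∫ s in a..b, q s * r s := by
  rw [← intervalIntegral.integral_const_mul]
  exact intervalIntegral.integral_mono_on hab ((continuous_const.mul hr).intervalIntegrable a b)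
    ((hq.mul hr).intervalIntegrable a b) fun s hs => mul_le_mul_of_nonneg_right (hcq s) (hr0 s hs)

lemma le_add_rpow_mul_rpow {a ε p : ℝ} (ha : 0 ≤ a) (hε : 0 < ε) (hp : 1 ≤ p) :
    a ≤ ε + ε ^ (1 - p) * a ^ p := by
  rcases le_or_gt a ε with haε | hεa
  · have := mul_nonneg (Real.rpow_nonneg hε.le (1 - p)) (Real.rpow_nonneg ha p)
    linarith
  · have ha' : 0 < a := hε.trans hεa
    calc a = a ^ (1 - p) * a ^ p := by rw [← Real.rpow_add ha']; norm_num
      _ ≤ ε ^ (1 - p) * a ^ p := mul_le_mul_of_nonneg_right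
        (Real.rpow_le_rpow_of_nonpos hε hεa.le (by linarith)) (Real.rpow_nonneg ha p)
      _ ≤ ε + ε ^ (1 - p) * a ^ p := by linarith

lemma intervalIntegral_mul_le_add_rpow {q g : ℝ → ℝ} {a b C ε p : ℝ} (hab : a ≤ b)
    (hq : Continuous q) (hq0 : ∀ s, 0 ≤ q s) (hg : Measurable g) (hg0 : ∀ s, 0 ≤ g s)
    (hgC : ∀ s, g s ≤ C) (hε : 0 < ε) (hp : 1 ≤ p) :
    ∫ s in a..b, q s * g s
      ≤ ε * (∫ s in a..b, q s) + ε ^ (1 - p) * ∫ s in a..b, q s * g s ^ p := by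
  have hgp : ∀ s, |g s ^ p| ≤ C ^ p := fun s => by
    rw [abs_of_nonneg (Real.rpow_nonneg (hg0 s) p)]
    exact Real.rpow_le_rpow (hg0 s) (hgC s) (by linarith)
  have hqg := intervalIntegrable_mul_of_abs_le hq hg
    (fun s => (abs_of_nonneg (hg0 s)).trans_le (hgC s)) a b
  have hqgp := intervalIntegrable_mul_of_abs_le hq (hg.pow_const p) hgp a b
  have hq' := hq.intervalIntegrable (μ := volume) a b
  rw [← intervalIntegral.integral_const_mul, ← intervalIntegral.integral_const_mul,
    ← intervalIntegral.integral_add (hq'.const_mul ε) (hqgp.const_mul _)]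
  refine intervalIntegral.integral_mono_on hab hqg ((hq'.const_mul ε).add (hqgp.const_mul _))
    fun s _ => ?_
  calc q s * g s ≤ q s * (ε + ε ^ (1 - p) * g s ^ p) :=
        mul_le_mul_of_nonneg_left (le_add_rpow_mul_rpow (hg0 s) hε hp) (hq0 s)
    _ = ε * q s + ε ^ (1 - p) * (q s * g s ^ p) := by ring

lemma intervalIntegral_abs_deriv_mul_comp_le {u u' h : ℝ → ℝ} {a b : ℝ} (hab : a ≤ b)
    (hu : ∀ s ∈ Icc a b, HasDerivWithinAt u (u' s) (Icc a b) s) (hinj : InjOn u (Icc a b))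
    (hh : Integrable h) (hh0 : 0 ≤ h) :
    ∫ s in a..b, |u' s| * h (u s) ≤ ∫ y, h y := by
  rw [intervalIntegral.integral_of_le hab, ← integral_Icc_eq_integral_Ioc]
  simp_rw [← smul_eq_mul, ← integral_image_eq_integral_abs_deriv_smul measurableSet_Icc hu hinj h]
  exact setIntegral_le_integral hh (ae_of_all _ hh0)

lemma rpow_add_one_le_of_forall_sq_le {c K J p δ : ℝ} (hc : 0 < c) (hK : 0 < K) (hJ : 0 ≤ J)
    (hp : 0 < p + 1) (hδ : 0 ≤ δ)
    (h : ∀ ε, 0 < ε → c * (δ ^ 2 / 2) ≤ ε * (K * δ) + ε ^ (1 - p) * J) :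
    δ ^ (p + 1) ≤ 4 / c * (c / (4 * K)) ^ (1 - p) * J := by
  rcases hδ.eq_or_lt with rfl | hδ
  · rw [Real.zero_rpow hp.ne']
    positivity
  -- This choice of `ε` absorbs `ε K δ` into half of the left-hand side.
  have hopt := h (c / (4 * K) * δ) (by positivity)
  rw [Real.mul_rpow (by positivity) hδ.le] at hopt
  have hquarter : c * δ ^ 2 / 4 ≤ (c / (4 * K)) ^ (1 - p) * δ ^ (1 - p) * J := by
    have : c / (4 * K) * δ * (K * δ) = c * δ ^ 2 / 4 := by field_simp
    linarith
  have hsplit : δ ^ (p + 1) = δ ^ (2 : ℝ) * δ ^ (p - 1) := by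
    rw [← Real.rpow_add hδ]; ring_nf
  calc δ ^ (p + 1) = 4 / c * (c * δ ^ 2 / 4) * δ ^ (p - 1) := by
        rw [hsplit, Real.rpow_two]; field_simp
    _ ≤ 4 / c * ((c / (4 * K)) ^ (1 - p) * δ ^ (1 - p) * J) * δ ^ (p - 1) := by gcongr
    _ = 4 / c * (c / (4 * K)) ^ (1 - p) * J * δ ^ ((1 - p) + (p - 1)) := by
        rw [Real.rpow_add hδ]; ring
    _ = 4 / c * (c / (4 * K)) ^ (1 - p) * J := by norm_num

lemma le_rpow_mul_rpow_neg_of_rpow_le {δ q B t : ℝ} (hδ : 0 ≤ δ) (hq : 0 < q) (hB : 0 ≤ B)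
    (ht : 0 < t) (h : δ ^ q ≤ B / t) : δ ≤ B ^ (1 / q) * t ^ (-(1 / q)) := by
  calc δ = (δ ^ q) ^ (1 / q) := by rw [← Real.rpow_mul hδ, mul_one_div_cancel hq.ne', Real.rpow_one]
    _ ≤ (B / t) ^ (1 / q) := by gcongr
    _ = B ^ (1 / q) * t ^ (-(1 / q)) := by
        rw [Real.div_rpow hB ht.le, div_eq_mul_inv, ← Real.rpow_neg ht.le]

section

variable {f φ : ℝ → ℝ} {M x t : ℝ}

lemma measurable_comp_characteristic (hf : ContDiff ℝ 2 f) (hφ : Measurable φ) (x t : ℝ) :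
    Measurable fun s => φ (x - t * deriv f s) :=
  hφ.comp <|
    (continuous_const.sub (continuous_const.mul (hf.continuous_deriv (by norm_num)))).measurable

lemma intervalIntegrable_eFun_integrand (hf : ContDiff ℝ 2 f) (hφ : Measurable φ)
    (hφM : ∀ y, |φ y| ≤ M) (x t a b : ℝ) :
    IntervalIntegrable (fun s => deriv (deriv f) s * (φ (x - t * deriv f s) - s)) volume a b := by
  have h₁ := intervalIntegrable_mul_of_abs_le hf.continuous_deriv_deriv
    (measurable_comp_characteristic hf hφ x t) (fun _ => hφM _) a b
  have h₂ : IntervalIntegrable (fun s => deriv (deriv f) s * s) volume a b :=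
    (hf.continuous_deriv_deriv.mul continuous_id).intervalIntegrable a b
  simpa only [mul_sub] using h₁.sub h₂

lemma intervalIntegrable_deriv_deriv_mul_abs_sub (hf : ContDiff ℝ 2 f) (hφ : Measurable φ)
    (hφM : ∀ y, |φ y| ≤ M) (x t m a b : ℝ) :
    IntervalIntegrable (fun s => deriv (deriv f) s * |φ (x - t * deriv f s) - m|) volume a b :=
  intervalIntegrable_mul_of_abs_le hf.continuous_deriv_deriv
    ((measurable_comp_characteristic hf hφ x t).sub_const m).abs
    (fun _ => (abs_abs _).trans_le ((abs_sub _ _).trans (add_le_add_left (hφM _) _))) a b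

lemma eFun_sub_eFun (hf : ContDiff ℝ 2 f) (hφ : Measurable φ) (hφM : ∀ y, |φ y| ≤ M)
    (x t v w : ℝ) :
    eFun f φ w x t - eFun f φ v x t
      = t * ∫ s in v..w, deriv (deriv f) s * (φ (x - t * deriv f s) - s) := by
  rw [eFun, eFun, ← mul_sub, intervalIntegral.integral_interval_sub_left
    (intervalIntegrable_eFun_integrand hf hφ hφM x t 0 w)
    (intervalIntegrable_eFun_integrand hf hφ hφM x t 0 v)]

lemma continuous_eFun (hf : ContDiff ℝ 2 f) (hφ : Measurable φ) (hφM : ∀ y, |φ y| ≤ M)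
    (x t : ℝ) : Continuous fun w => eFun f φ w x t :=
  continuous_const.mul (intervalIntegral.continuous_primitive
    (intervalIntegrable_eFun_integrand hf hφ hφM x t) 0)

lemma eFun_lt_eFun_of_lt (hf : ContDiff ℝ 2 f) (hpos : ∀ u, 0 < deriv (deriv f) u)
    (hφ : Measurable φ) (hφM : ∀ y, |φ y| ≤ M) (ht : 0 < t) {v : ℝ} (hv : M < v) :
    eFun f φ v x t < eFun f φ M x t := by
  have hI : 0 < ∫ s in M..v, -(deriv (deriv f) s * (φ (x - t * deriv f s) - s)) :=
    intervalIntegral.intervalIntegral_pos_of_pos_on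
      (intervalIntegrable_eFun_integrand hf hφ hφM x t M v).neg
      (fun s hs => neg_pos.2 (mul_neg_of_pos_of_neg (hpos s)
        (by linarith [le_of_abs_le (hφM (x - t * deriv f s)), hs.1]))) hv
  rw [intervalIntegral.integral_neg] at hI
  have := eFun_sub_eFun hf hφ hφM x t M v
  nlinarith

lemma eFun_lt_eFun_of_lt_neg (hf : ContDiff ℝ 2 f) (hpos : ∀ u, 0 < deriv (deriv f) u)
    (hφ : Measurable φ) (hφM : ∀ y, |φ y| ≤ M) (ht : 0 < t) {v : ℝ} (hv : v < -M) :
    eFun f φ v x t < eFun f φ (-M) x t := by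
  have hI : 0 < ∫ s in v..(-M), deriv (deriv f) s * (φ (x - t * deriv f s) - s) :=
    intervalIntegral.intervalIntegral_pos_of_pos_on
      (intervalIntegrable_eFun_integrand hf hφ hφM x t v (-M))
      (fun s hs => mul_pos (hpos s)
        (by linarith [neg_le_of_abs_le (hφM (x - t * deriv f s)), hs.2])) hv
  have := eFun_sub_eFun hf hφ hφM x t v (-M)
  nlinarith

lemma maxSet_subset_Icc (hf : ContDiff ℝ 2 f) (hpos : ∀ u, 0 < deriv (deriv f) u)
    (hφ : Measurable φ) (hφM : ∀ y, |φ y| ≤ M) (ht : 0 < t) :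
    maxSet f φ x t ⊆ Icc (-M) M := fun _ hw =>
  ⟨not_lt.1 fun h => (eFun_lt_eFun_of_lt_neg hf hpos hφ hφM ht h).not_ge (hw _),
    not_lt.1 fun h => (eFun_lt_eFun_of_lt hf hpos hφ hφM ht h).not_ge (hw _)⟩

lemma isClosed_maxSet (hf : ContDiff ℝ 2 f) (hφ : Measurable φ) (hφM : ∀ y, |φ y| ≤ M)
    (x t : ℝ) : IsClosed (maxSet f φ x t) := by
  have : maxSet f φ x t = ⋂ v, {w | eFun f φ v x t ≤ eFun f φ w x t} := by
    ext w; simp [maxSet]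
  rw [this]
  exact isClosed_iInter fun v => isClosed_le continuous_const (continuous_eFun hf hφ hφM x t)

lemma isCompact_maxSet (hf : ContDiff ℝ 2 f) (hpos : ∀ u, 0 < deriv (deriv f) u)
    (hφ : Measurable φ) (hφM : ∀ y, |φ y| ≤ M) (ht : 0 < t) : IsCompact (maxSet f φ x t) :=
  isCompact_Icc.of_isClosed_subset (isClosed_maxSet hf hφ hφM x t)
    (maxSet_subset_Icc hf hpos hφ hφM ht)

lemma maxSet_nonempty (hf : ContDiff ℝ 2 f) (hpos : ∀ u, 0 < deriv (deriv f) u)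
    (hφ : Measurable φ) (hφM : ∀ y, |φ y| ≤ M) (ht : 0 < t) : (maxSet f φ x t).Nonempty := by
  have hM : -M ≤ M := neg_le_self ((abs_nonneg _).trans (hφM 0))
  obtain ⟨w, hwM, hw⟩ := isCompact_Icc.exists_isMaxOn (nonempty_Icc.2 hM)
    (continuous_eFun hf hφ hφM x t).continuousOn
  refine ⟨w, fun v => ?_⟩
  rcases lt_or_ge v (-M) with hv | hv
  · exact (eFun_lt_eFun_of_lt_neg hf hpos hφ hφM ht hv).le.trans (hw ⟨le_rfl, hM⟩)
  rcases le_or_gt v M with hv' | hv'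
  · exact hw ⟨hv, hv'⟩
  · exact (eFun_lt_eFun_of_lt hf hpos hφ hφM ht hv').le.trans (hw ⟨hM, le_rfl⟩)

lemma intervalIntegral_nonneg_of_mem_maxSet (hf : ContDiff ℝ 2 f) (hφ : Measurable φ)
    (hφM : ∀ y, |φ y| ≤ M) (ht : 0 < t) {w : ℝ} (hw : w ∈ maxSet f φ x t) (v : ℝ) :
    0 ≤ ∫ s in v..w, deriv (deriv f) s * (φ (x - t * deriv f s) - s) :=
  (mul_nonneg_iff_of_pos_left ht).1 (eFun_sub_eFun hf hφ hφM x t v w ▸ sub_nonneg.2 (hw v))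

lemma mul_intervalIntegral_deriv_deriv_mul_comp_le (hf : ContDiff ℝ 2 f)
    (hpos : ∀ u, 0 < deriv (deriv f) u) {h : ℝ → ℝ} (hh : Integrable h) (hh0 : 0 ≤ h)
    (ht : 0 < t) {a b : ℝ} (hab : a ≤ b) :
    t * ∫ s in a..b, deriv (deriv f) s * h (x - t * deriv f s) ≤ ∫ y, h y := by
  have hderiv : ∀ s, HasDerivAt (fun s => x - t * deriv f s) (-(t * deriv (deriv f) s)) s :=
    fun s => by
      simpa using ((hf.deriv' (n := 1)).differentiable one_ne_zero s).hasDerivAt.const_mul t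
        |>.const_sub x
  have hinj : Function.Injective fun s => x - t * deriv f s := fun _ _ hst =>
    (strictMono_of_deriv_pos hpos).injective (mul_left_cancel₀ ht.ne' (sub_right_injective hst))
  convert intervalIntegral_abs_deriv_mul_comp_le hab (fun s _ => (hderiv s).hasDerivWithinAt)
    hinj.injOn hh hh0 using 1
  rw [← intervalIntegral.integral_const_mul]
  congr 1 with s
  rw [abs_neg, abs_of_pos (mul_pos ht (hpos s)), mul_assoc]

lemma intervalIntegral_deriv_deriv_mul_abs_sub_le (hf : ContDiff ℝ 2 f)
    (hpos : ∀ u, 0 < deriv (deriv f) u) (hφ : Measurable φ) (hφM : ∀ y, |φ y| ≤ M)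
    {m p K ε : ℝ} (hp : 1 ≤ p) (hLp : Integrable fun y => |φ y - m| ^ p) {a b : ℝ} (hab : a ≤ b)
    (hK : ∀ s ∈ Icc a b, deriv (deriv f) s ≤ K) (ht : 0 < t) (hε : 0 < ε) :
    ∫ s in a..b, deriv (deriv f) s * |φ (x - t * deriv f s) - m|
      ≤ ε * (K * (b - a)) + ε ^ (1 - p) * ((∫ y, |φ y - m| ^ p) / t) := by
  have hf'' := hf.continuous_deriv_deriv
  have hint : ∫ s in a..b, deriv (deriv f) s ≤ K * (b - a) := by
    simpa [mul_comm] using intervalIntegral.integral_mono_on hab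
      (hf''.intervalIntegrable (μ := volume) a b) intervalIntegrable_const hK
  have hcov : ∫ s in a..b, deriv (deriv f) s * |φ (x - t * deriv f s) - m| ^ p
      ≤ (∫ y, |φ y - m| ^ p) / t := by
    rw [le_div_iff₀ ht, mul_comm]
    exact mul_intervalIntegral_deriv_deriv_mul_comp_le hf hpos hLp
      (fun y => Real.rpow_nonneg (abs_nonneg _) p) ht hab
  calc _ ≤ ε * (∫ s in a..b, deriv (deriv f) s)
        + ε ^ (1 - p) * ∫ s in a..b, deriv (deriv f) s * |φ (x - t * deriv f s) - m| ^ p :=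
        intervalIntegral_mul_le_add_rpow hab hf'' (fun s => (hpos s).le)
          ((measurable_comp_characteristic hf hφ x t).sub_const m).abs (fun _ => abs_nonneg _)
          (fun s => (abs_sub _ _).trans (add_le_add_left (hφM _) _)) hε hp
    _ ≤ _ := by gcongr

lemma sq_le_intervalIntegral_of_mem_maxSet_of_le (hf : ContDiff ℝ 2 f) (hφ : Measurable φ)
    (hφM : ∀ y, |φ y| ≤ M) {c₀ : ℝ} (hc₀ : 0 ≤ c₀) (huc : ∀ u, c₀ ≤ deriv (deriv f) u)
    (ht : 0 < t) {m w : ℝ} (hw : w ∈ maxSet f φ x t) (hmw : m ≤ w) :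
    c₀ * ((w - m) ^ 2 / 2) ≤ ∫ s in m..w, deriv (deriv f) s * |φ (x - t * deriv f s) - m| := by
  have hf'' := hf.continuous_deriv_deriv
  have hg := intervalIntegrable_deriv_deriv_mul_abs_sub hf hφ hφM x t m m w
  have hlin : IntervalIntegrable (fun s => deriv (deriv f) s * (s - m)) volume m w :=
    (hf''.mul (continuous_id.sub continuous_const)).intervalIntegrable m w
  have hmax := intervalIntegral.integral_mono_on hmw
    (intervalIntegrable_eFun_integrand hf hφ hφM x t m w) (hg.sub hlin) fun s _ => by
      have := mul_le_mul_of_nonneg_left (le_abs_self (φ (x - t * deriv f s) - m))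
        (hc₀.trans (huc s))
      linarith
  rw [intervalIntegral.integral_sub hg hlin] at hmax
  have hlow := mul_integral_le_integral_mul (r := fun s => s - m) hmw hf'' (by fun_prop) huc
    fun s hs => sub_nonneg.2 hs.1
  have hsq : ∫ s in m..w, (s - m) = (w - m) ^ 2 / 2 := by simp; ring
  rw [hsq] at hlow
  linarith [intervalIntegral_nonneg_of_mem_maxSet hf hφ hφM ht hw m]

lemma sq_le_intervalIntegral_of_mem_maxSet_of_ge (hf : ContDiff ℝ 2 f) (hφ : Measurable φ)
    (hφM : ∀ y, |φ y| ≤ M) {c₀ : ℝ} (hc₀ : 0 ≤ c₀) (huc : ∀ u, c₀ ≤ deriv (deriv f) u)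
    (ht : 0 < t) {m w : ℝ} (hw : w ∈ maxSet f φ x t) (hwm : w ≤ m) :
    c₀ * ((m - w) ^ 2 / 2) ≤ ∫ s in w..m, deriv (deriv f) s * |φ (x - t * deriv f s) - m| := by
  have hf'' := hf.continuous_deriv_deriv
  have hg := intervalIntegrable_deriv_deriv_mul_abs_sub hf hφ hφM x t m w m
  have hlin : IntervalIntegrable (fun s => deriv (deriv f) s * (m - s)) volume w m :=
    (hf''.mul (continuous_const.sub continuous_id)).intervalIntegrable w m
  have hmax := intervalIntegral.integral_mono_on hwm (hlin.sub hg)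
    (intervalIntegrable_eFun_integrand hf hφ hφM x t w m) fun s _ => by
      have := mul_le_mul_of_nonneg_left (neg_abs_le (φ (x - t * deriv f s) - m))
        (hc₀.trans (huc s))
      linarith
  rw [intervalIntegral.integral_sub hlin hg] at hmax
  have hlow := mul_integral_le_integral_mul (r := fun s => m - s) hwm hf'' (by fun_prop) huc
    fun s hs => sub_nonneg.2 hs.2
  have hsq : ∫ s in w..m, (m - s) = (m - w) ^ 2 / 2 := by
    rw [intervalIntegral.integral_comp_sub_left (fun s => s)]; simp
  rw [hsq] at hlow
  have hnonneg := intervalIntegral_nonneg_of_mem_maxSet hf hφ hφM ht hw m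
  rw [intervalIntegral.integral_symm] at hnonneg
  linarith

lemma abs_sub_rpow_le_of_mem_maxSet (hf : ContDiff ℝ 2 f) (hφ : Measurable φ)
    (hφM : ∀ y, |φ y| ≤ M) {c₀ m p K : ℝ} (hc₀ : 0 < c₀) (huc : ∀ u, c₀ ≤ deriv (deriv f) u)
    (hp : 1 ≤ p) (hLp : Integrable fun y => |φ y - m| ^ p) (ht : 0 < t) {w : ℝ}
    (hw : w ∈ maxSet f φ x t) (hK : ∀ s ∈ uIcc m w, deriv (deriv f) s ≤ K) :
    |w - m| ^ (p + 1) ≤ 4 / c₀ * (c₀ / (4 * K)) ^ (1 - p) * (∫ y, |φ y - m| ^ p) / t := by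
  rw [mul_div_assoc]
  have hpos : ∀ u, 0 < deriv (deriv f) u := fun u => hc₀.trans_le (huc u)
  have hKpos : 0 < K := (hpos m).trans_le (hK m left_mem_uIcc)
  have hJ : 0 ≤ (∫ y, |φ y - m| ^ p) / t := by positivity
  rcases le_total m w with hmw | hwm
  · rw [abs_of_nonneg (sub_nonneg.2 hmw)]
    refine rpow_add_one_le_of_forall_sq_le hc₀ hKpos hJ (by linarith) (sub_nonneg.2 hmw)
      fun ε hε => ?_
    exact (sq_le_intervalIntegral_of_mem_maxSet_of_le hf hφ hφM hc₀.le huc ht hw hmw).trans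
      (intervalIntegral_deriv_deriv_mul_abs_sub_le hf hpos hφ hφM hp hLp hmw
        (fun s hs => hK s (Icc_subset_uIcc hs)) ht hε)
  · rw [abs_sub_comm, abs_of_nonneg (sub_nonneg.2 hwm)]
    refine rpow_add_one_le_of_forall_sq_le hc₀ hKpos hJ (by linarith) (sub_nonneg.2 hwm)
      fun ε hε => ?_
    exact (sq_le_intervalIntegral_of_mem_maxSet_of_ge hf hφ hφM hc₀.le huc ht hw hwm).trans
      (intervalIntegral_deriv_deriv_mul_abs_sub_le hf hpos hφ hφM hp hLp hwm
        (fun s hs => hK s (Icc_subset_uIcc' hs)) ht hε)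

end

theorem stmt19_uniform_decay_general
    (f φ : ℝ → ℝ) (M : ℝ)
    (hf : ContDiff ℝ 2 f)
    (hφmeas : Measurable φ)
    (hφbdd : ∀ x : ℝ, |φ x| ≤ M)
    (c₀ m p : ℝ) (hc₀ : 0 < c₀)
    (huc : ∀ u : ℝ, c₀ ≤ deriv (deriv f) u)
    (hp : 1 ≤ p)
    (hLp : Integrable (fun x : ℝ => |φ x - m| ^ p)) :
    ∃ C : ℝ, 0 < C ∧ ∀ x t : ℝ, 0 < t →
      (∀ w ∈ maxSet f φ x t, |w - m| ≤ C * t ^ (-(1 / (p + 1)))) ∧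
      |uPlus f φ x t - m| ≤ C * t ^ (-(1 / (p + 1))) ∧
      |uMinus f φ x t - m| ≤ C * t ^ (-(1 / (p + 1))) := by
  have hpos : ∀ u, 0 < deriv (deriv f) u := fun u => hc₀.trans_le (huc u)
  have hM : 0 ≤ M := (abs_nonneg _).trans (hφbdd 0)
  obtain ⟨R, hMR, hmR⟩ : ∃ R, Icc (-M) M ⊆ Icc (-R) R ∧ m ∈ Icc (-R) R :=
    ⟨M + |m|, Icc_subset_Icc (by linarith [abs_nonneg m]) (by linarith [abs_nonneg m]),
      abs_le.1 (by linarith)⟩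
  obtain ⟨K, hK⟩ := isCompact_Icc.exists_bound_of_continuousOn (s := Icc (-R) R)
    hf.continuous_deriv_deriv.continuousOn
  have hKpos : 0 < K := (hpos m).trans_le ((le_abs_self _).trans (hK m hmR))
  set A := 4 / c₀ * (c₀ / (4 * K)) ^ (1 - p) * ∫ y, |φ y - m| ^ p
  have hA : 0 ≤ A := by positivity
  refine ⟨(A + 1) ^ (1 / (p + 1)), by positivity, fun x t ht => ?_⟩
  have hdecay : ∀ w ∈ maxSet f φ x t, |w - m| ≤ (A + 1) ^ (1 / (p + 1)) * t ^ (-(1 / (p + 1))) := by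
    intro w hw
    have hseg : uIcc m w ⊆ Icc (-R) R :=
      uIcc_subset_Icc hmR (hMR (maxSet_subset_Icc hf hpos hφmeas hφbdd ht hw))
    refine le_rpow_mul_rpow_neg_of_rpow_le (abs_nonneg _) (by linarith) (by linarith) ht ?_
    calc |w - m| ^ (p + 1) ≤ A / t := abs_sub_rpow_le_of_mem_maxSet hf hφmeas hφbdd hc₀ huc hp
          hLp ht hw fun s hs => (le_abs_self _).trans (hK s (hseg hs))
      _ ≤ (A + 1) / t := by gcongr; linarith
  have hcpt := isCompact_maxSet hf hpos hφmeas hφbdd ht (x := x)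
  have hne := maxSet_nonempty hf hpos hφmeas hφbdd ht (x := x)
  exact ⟨hdecay, hdecay _ (hcpt.sInf_mem hne), hdecay _ (hcpt.sSup_mem hne)⟩

/-- uniform sup-norm decay for uniformly convex flux and `Lᵖ`
perturbations of a constant state. -/
theorem stmt19_uniform_decay
    (f φ : ℝ → ℝ) (M : ℝ)
    (hf : ContDiff ℝ 2 f)
    (hconv : ∀ u : ℝ, 0 ≤ deriv (deriv f) u)
    (hdeg : volume {u : ℝ | deriv (deriv f) u = 0} = 0)
    (hφmeas : Measurable φ)
    (hφbdd : ∀ x : ℝ, |φ x| ≤ M)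
    (c₀ m p : ℝ) (hc₀ : 0 < c₀)
    (huc : ∀ u : ℝ, c₀ ≤ deriv (deriv f) u)
    (hp : 1 ≤ p)
    (hLp : Integrable (fun x : ℝ => |φ x - m| ^ p)) :
    ∃ C : ℝ, 0 < C ∧ ∀ x t : ℝ, 0 < t →
      (∀ w ∈ maxSet f φ x t, |w - m| ≤ C * t ^ (-(1 / (p + 1)))) ∧
      |uPlus f φ x t - m| ≤ C * t ^ (-(1 / (p + 1))) ∧
      |uMinus f φ x t - m| ≤ C * t ^ (-(1 / (p + 1))) :=
  stmt19_uniform_decay_general f φ M hf hφmeas hφbdd c₀ m p hc₀ huc hp hLp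
end
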